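/- arXiv:1905.07216 — 2 statements merged into one kernel-verified Lean document; each statement's English description precedes it below -/
import Mathlib

section
/- There is a constant C > 0 such that for every h ∈ (0, 1) and every x ∈ [0,1]^2, ∫_0^1 ∫_{[0,1]^2} (r^{1/4} + |x - y| + h)^{-6} dy dr ≤ C (1 - log h). -/
/-!
Enlarging the `y`-domain to all of `ℝ²` and rescaling by `a = r^{1/4} + h` bounds the inner
integral by `a⁻⁴ K` with `K = ∫ (1 + ‖w‖)^{-6} dw < ∞`. Since `a⁴ ≥ r + h⁴`, the double integral is
at most `K ∫₀¹ (r + h⁴)⁻¹ dr = K (log (1 + h⁴) - 4 log h) ≤ K (1 - 4 log h)`.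
-/

open Real MeasureTheory Module

lemma add_norm_rpow_eq_mul_one_add_norm_smul {E : Type*} [NormedAddCommGroup E]
    [NormedSpace ℝ E] {a : ℝ} (ha : 0 < a) (s : ℝ) (z : E) :
    (a + ‖z‖) ^ s = a ^ s * (1 + ‖a⁻¹ • z‖) ^ s := by
  have : a + ‖z‖ = a * (1 + ‖a⁻¹ • z‖) := by
    rw [norm_smul, Real.norm_eq_abs, abs_of_pos (inv_pos.2 ha)]
    field_simp
  rw [this, mul_rpow ha.le (by positivity)]

section HaarScaling

variable {E : Type*} [NormedAddCommGroup E] [NormedSpace ℝ E] [FiniteDimensional ℝ E]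
  [MeasurableSpace E] [BorelSpace E] (μ : Measure E) [μ.IsAddHaarMeasure]

lemma integrable_add_norm_rpow_neg {a s : ℝ} (ha : 0 < a) (hs : (finrank ℝ E : ℝ) < s) :
    Integrable (fun z : E => (a + ‖z‖) ^ (-s)) μ := by
  have := ((integrable_one_add_norm (μ := μ) hs).comp_smul (inv_ne_zero ha.ne')).const_mul
    (a ^ (-s))
  simpa only [← add_norm_rpow_eq_mul_one_add_norm_smul ha] using this

lemma integral_add_norm_rpow_neg {a : ℝ} (ha : 0 < a) (s : ℝ) :
    ∫ z, (a + ‖z‖) ^ (-s) ∂μ = a ^ ((finrank ℝ E : ℝ) - s) * ∫ w, (1 + ‖w‖) ^ (-s) ∂μ := by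
  simp_rw [add_norm_rpow_eq_mul_one_add_norm_smul ha, integral_const_mul,
    Measure.integral_comp_inv_smul μ (fun w => (1 + ‖w‖) ^ (-s)) a,
    abs_of_pos (pow_pos ha _), smul_eq_mul, rpow_sub ha, rpow_neg ha.le, rpow_natCast]
  ring

lemma setIntegral_add_norm_sub_rpow_neg_le {a s : ℝ} (ha : 0 < a) (hs : (finrank ℝ E : ℝ) < s)
    (x : E) (S : Set E) :
    ∫ y in S, (a + ‖x - y‖) ^ (-s) ∂μ ≤ a ^ ((finrank ℝ E : ℝ) - s) * ∫ w, (1 + ‖w‖) ^ (-s) ∂μ := by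
  simp_rw [norm_sub_rev x]
  calc ∫ y in S, (a + ‖y - x‖) ^ (-s) ∂μ ≤ ∫ y, (a + ‖y - x‖) ^ (-s) ∂μ :=
        setIntegral_le_integral ((integrable_add_norm_rpow_neg μ ha hs).comp_sub_right x)
          (.of_forall fun y => by positivity)
    _ = _ := by
        rw [integral_sub_right_eq_self (fun z => (a + ‖z‖) ^ (-s)), integral_add_norm_rpow_neg μ ha]

lemma add_le_rpow_quarter_add_pow_four {r h : ℝ} (hr : 0 ≤ r) (hh : 0 ≤ h) :
    r + h ^ 4 ≤ (r ^ (1 / 4 : ℝ) + h) ^ 4 := by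
  set q := r ^ (1 / 4 : ℝ)
  have hq : 0 ≤ q := rpow_nonneg hr _
  have hq4 : q ^ 4 = r := by
    rw [← rpow_natCast, ← rpow_mul hr]
    norm_num
  rw [← hq4]
  nlinarith [mul_nonneg (mul_nonneg (mul_nonneg hq hq) hq) hh,
    mul_nonneg (mul_nonneg hq hq) (mul_nonneg hh hh), mul_nonneg hq (mul_nonneg hh (mul_nonneg hh hh))]

lemma setIntegral_rpow_quarter_add_norm_sub_add_le {r h : ℝ} (hr : 0 ≤ r) (hh : 0 < h)
    (x : E) (S : Set E) :
    ∫ y in S, (r ^ (1 / 4 : ℝ) + ‖x - y‖ + h) ^ (-((finrank ℝ E : ℝ) + 4)) ∂μ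
      ≤ (∫ w, (1 + ‖w‖) ^ (-((finrank ℝ E : ℝ) + 4)) ∂μ) * (r + h ^ 4)⁻¹ := by
  set a := r ^ (1 / 4 : ℝ) + h
  have ha : 0 < a := by positivity
  have hK : 0 ≤ ∫ w, (1 + ‖w‖) ^ (-((finrank ℝ E : ℝ) + 4)) ∂μ :=
    integral_nonneg fun w => by positivity
  have hscale : a ^ ((finrank ℝ E : ℝ) - ((finrank ℝ E : ℝ) + 4)) = (a ^ 4)⁻¹ := by
    rw [show (finrank ℝ E : ℝ) - ((finrank ℝ E : ℝ) + 4) = -(4 : ℕ) by ring, rpow_neg ha.le,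
      rpow_natCast]
  calc ∫ y in S, (r ^ (1 / 4 : ℝ) + ‖x - y‖ + h) ^ (-((finrank ℝ E : ℝ) + 4)) ∂μ
      = ∫ y in S, (a + ‖x - y‖) ^ (-((finrank ℝ E : ℝ) + 4)) ∂μ := by
        simp_rw [a, add_right_comm]
    _ ≤ (a ^ 4)⁻¹ * ∫ w, (1 + ‖w‖) ^ (-((finrank ℝ E : ℝ) + 4)) ∂μ := by
        rw [← hscale]
        exact setIntegral_add_norm_sub_rpow_neg_le μ ha (by linarith) x S
    _ ≤ (r + h ^ 4)⁻¹ * ∫ w, (1 + ‖w‖) ^ (-((finrank ℝ E : ℝ) + 4)) ∂μ := by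
        gcongr
        exact add_le_rpow_quarter_add_pow_four hr hh.le
    _ = _ := mul_comm _ _

end HaarScaling

lemma integral_Ioo_zero_one_inv_add {c : ℝ} (hc : 0 < c) :
    ∫ r in Set.Ioo (0 : ℝ) 1, (r + c)⁻¹ = log (1 + c) - log c := by
  rw [← integral_Ioc_eq_integral_Ioo, ← intervalIntegral.integral_of_le zero_le_one,
    intervalIntegral.integral_comp_add_right (fun u => u⁻¹), zero_add,
    integral_inv_of_pos hc (by positivity), log_div (by positivity) hc.ne']

lemma integrableOn_Ioo_zero_one_inv_add {c : ℝ} (hc : 0 < c) :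
    IntegrableOn (fun r => (r + c)⁻¹) (Set.Ioo (0 : ℝ) 1) := by
  refine (ContinuousOn.integrableOn_Icc ?_).mono_set Set.Ioo_subset_Icc_self
  exact ContinuousOn.inv₀ (by fun_prop) fun r hr => by linarith [hr.1]

/-- There is `C > 0` such that for every `h ∈ (0,1)` and every `x ∈ [0,1]²`,
`∫_0^1 ∫_{[0,1]²} (r^{1/4} + ‖x-y‖ + h)^{-6} dy dr ≤ C (1 - log h)`. -/
theorem stmt6 :
    ∃ C : ℝ, 0 < C ∧
      ∀ h ∈ Set.Ioo (0 : ℝ) 1,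
        ∀ x ∈ {y : EuclideanSpace ℝ (Fin 2) | ∀ i, y i ∈ Set.Icc (0 : ℝ) 1},
          (∫ r in Set.Ioo (0 : ℝ) 1,
            ∫ y in {y : EuclideanSpace ℝ (Fin 2) | ∀ i, y i ∈ Set.Icc (0 : ℝ) 1},
              (r ^ (1 / 4 : ℝ) + ‖x - y‖ + h) ^ (-6 : ℝ))
            ≤ C * (1 - Real.log h) := by
  have hexp : (-6 : ℝ) = -((finrank ℝ (EuclideanSpace ℝ (Fin 2)) : ℝ) + 4) := by
    rw [finrank_euclideanSpace_fin]
    norm_num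
  set K := ∫ w : EuclideanSpace ℝ (Fin 2), (1 + ‖w‖) ^ (-6 : ℝ)
  have hK : 0 ≤ K := integral_nonneg fun w => by positivity
  refine ⟨4 * K + 1, by positivity, fun h ⟨hh0, hh1⟩ x _ => ?_⟩
  have hlog : log (1 + h ^ 4) ≤ 1 := by
    linarith [log_le_sub_one_of_pos (by positivity : (0 : ℝ) < 1 + h ^ 4),
      pow_le_one₀ hh0.le hh1.le (n := 4)]
  have hlogh : log h < 0 := log_neg hh0 hh1
  calc _ ≤ ∫ r in Set.Ioo (0 : ℝ) 1, K * (r + h ^ 4)⁻¹ := by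
        refine integral_mono_of_nonneg ?_
          ((integrableOn_Ioo_zero_one_inv_add (by positivity)).const_mul K) ?_
        all_goals filter_upwards [ae_restrict_mem measurableSet_Ioo] with r hr
        · exact integral_nonneg fun y => rpow_nonneg (by have := hr.1; positivity) _
        · have := setIntegral_rpow_quarter_add_norm_sub_add_le volume hr.1.le hh0 x
            {y : EuclideanSpace ℝ (Fin 2) | ∀ i, y i ∈ Set.Icc (0 : ℝ) 1}
          rwa [← hexp] at this
    _ = K * (log (1 + h ^ 4) - 4 * log h) := by
        rw [integral_const_mul, integral_Ioo_zero_one_inv_add (by positivity), log_pow]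
        push_cast
        ring
    _ ≤ (4 * K + 1) * (1 - log h) := by
        linarith [mul_le_mul_of_nonneg_left hlog hK]
end

section
/- Let u_A be uniformly bounded, |u_A| ≤ M, and let N(u,v) = f(u+v)-f(u)-f'(u)v = v^2(3u+v) with f(u)=u^3-u. Then for any Y, Z ∈ L^3(D) with ‖Z‖_{L^∞} ≤ K ≤ 1: |⟨N(u_A, Y+Z), Z⟩| ≤ C K ( K^3 + K^2 + ‖Y‖_{L^3}^2 + ‖Y‖_{L^3}^3 ), where C depends only on M and |D|. -/
/-!
Pointwise, `|u| ≤ M` and `|z| ≤ K ≤ 1` give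
`|(y + z)² (3u + y + z) z| ≤ (6M + 3) K (K² + y² + |y|³)`.
Since the unit square is a probability space, integrating this bound and using Hölder's
inequality `∫ |Y|² ≤ (∫ |Y|³)^(2/3)` yields the estimate with `C = 6|M| + 3`.
-/

open MeasureTheory

lemma abs_cubic_remainder_mul_le {M K u y z : ℝ} (hu : |u| ≤ M) (hz : |z| ≤ K)
    (hK : K ≤ 1) :
    |(y + z) ^ 2 * (3 * u + (y + z)) * z| ≤ (6 * M + 3) * K * (K ^ 2 + |y| ^ 2 + |y| ^ 3) := by
  have hM : 0 ≤ M := (abs_nonneg u).trans hu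
  have hK0 : 0 ≤ K := (abs_nonneg z).trans hz
  have hy := abs_nonneg y
  have hsq : |y + z| ^ 2 ≤ 2 * (|y| ^ 2 + K ^ 2) := by
    nlinarith [abs_add_le y z, abs_nonneg (y + z), sq_nonneg (|y| - K)]
  have hlin : |3 * u + (y + z)| ≤ 3 * M + 1 + |y| := by
    have := abs_add_le (3 * u) (y + z)
    have := abs_add_le y z
    rw [abs_mul, abs_of_pos (by norm_num : (0 : ℝ) < 3)] at *
    linarith
  -- `2 K² |y| ≤ K² + K² y² ≤ K² + y²` absorbs the mixed term, using `K ≤ 1`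
  have hmixed : 2 * K ^ 2 * |y| ≤ K ^ 2 + |y| ^ 2 := by
    have hK2 : K ^ 2 ≤ 1 := pow_le_one₀ hK0 hK
    nlinarith [mul_nonneg (sq_nonneg K) (sq_nonneg (|y| - 1)),
      mul_nonneg (sub_nonneg.2 hK2) (sq_nonneg |y|)]
  calc |(y + z) ^ 2 * (3 * u + (y + z)) * z|
      = |y + z| ^ 2 * |3 * u + (y + z)| * |z| := by rw [abs_mul, abs_mul, abs_pow]
    _ ≤ 2 * (|y| ^ 2 + K ^ 2) * (3 * M + 1 + |y|) * K := by gcongr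
    _ ≤ (6 * M + 3) * K * (K ^ 2 + |y| ^ 2 + |y| ^ 3) := by
      nlinarith [mul_le_mul_of_nonneg_left hmixed hK0, mul_nonneg hK0 (pow_nonneg hy 3),
        mul_nonneg (mul_nonneg hM hK0) (pow_nonneg hy 3)]

section ProbabilityMeasure

variable {α : Type*} [MeasurableSpace α] {μ : Measure α} [IsProbabilityMeasure μ]

lemma integral_abs_rpow_le_integral_abs_rpow_rpow {f : α → ℝ} {p q : ℝ} (hp : 0 < p)
    (hpq : p < q) (hf : AEStronglyMeasurable f μ) (hq : Integrable (fun x ↦ |f x| ^ q) μ) :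
    ∫ x, |f x| ^ p ∂μ ≤ (∫ x, |f x| ^ q ∂μ) ^ (p / q) := by
  have hr : 1 < q / p := (one_lt_div hp).2 hpq
  have hpow : ∀ x, (|f x| ^ p) ^ (q / p) = |f x| ^ q := fun x ↦ by
    rw [← Real.rpow_mul (abs_nonneg _), mul_div_cancel₀ _ hp.ne']
  have hmem : MemLp (fun x ↦ |f x| ^ p) (ENNReal.ofReal (q / p)) μ := by
    have hmeas := (hf.aemeasurable.abs.pow_const p).aestronglyMeasurable
    rw [← integrable_norm_rpow_iff hmeas (ENNReal.ofReal_pos.2 (by linarith)).ne'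
      ENNReal.ofReal_ne_top, ENNReal.toReal_ofReal (by linarith)]
    simpa [abs_abs, Real.abs_rpow_of_nonneg, hpow] using hq
  have := integral_mul_le_Lp_mul_Lq_of_nonneg (.conjExponent hr)
    (.of_forall fun x ↦ by positivity) (.of_forall fun _ ↦ zero_le_one) hmem (memLp_const 1)
  simpa [hpow, one_div_div] using this

lemma abs_integral_le_of_abs_le_sq_add_cube {F Y : α → ℝ} {a c : ℝ} (hc : 0 ≤ c)
    (hY : AEStronglyMeasurable Y μ) (hY3 : Integrable (fun x ↦ |Y x| ^ 3) μ)
    (hF : ∀ᵐ x ∂μ, |F x| ≤ c * (a + |Y x| ^ 2 + |Y x| ^ 3)) :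
    |∫ x, F x ∂μ| ≤
      c * (a + (∫ x, |Y x| ^ 3 ∂μ) ^ ((2 : ℝ) / 3) + ∫ x, |Y x| ^ 3 ∂μ) := by
  have hY3r : Integrable (fun x ↦ |Y x| ^ (3 : ℝ)) μ := by simpa using hY3
  have hY2 : Integrable (fun x ↦ |Y x| ^ 2) μ := by
    simpa using integrable_norm_rpow_of_le hY (by norm_num) (by norm_num)
      (by norm_num : (2 : ℝ) ≤ 3) hY3r
  have hL2L3 : ∫ x, |Y x| ^ 2 ∂μ ≤ (∫ x, |Y x| ^ 3 ∂μ) ^ ((2 : ℝ) / 3) := by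
    simpa using integral_abs_rpow_le_integral_abs_rpow_rpow (by norm_num : (0 : ℝ) < 2)
      (by norm_num : (2 : ℝ) < 3) hY hY3r
  have hlower : Integrable (fun x ↦ a + |Y x| ^ 2) μ := (integrable_const a).add hY2
  have hmajorant : Integrable (fun x ↦ c * (a + |Y x| ^ 2 + |Y x| ^ 3)) μ :=
    (hlower.add hY3).const_mul c
  calc |∫ x, F x ∂μ| ≤ ∫ x, c * (a + |Y x| ^ 2 + |Y x| ^ 3) ∂μ :=
        norm_integral_le_of_norm_le (f := F) hmajorant hF
    _ = c * (a + ∫ x, |Y x| ^ 2 ∂μ + ∫ x, |Y x| ^ 3 ∂μ) := by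
        rw [integral_const_mul, integral_add hlower hY3, integral_add (integrable_const a) hY2,
          integral_const, probReal_univ, one_smul]
    _ ≤ _ := by gcongr

end ProbabilityMeasure

instance isProbabilityMeasure_volume_restrict_unitSquare :
    IsProbabilityMeasure (volume.restrict (Set.Icc ((0 : ℝ), (0 : ℝ)) (1, 1))) := by
  constructor
  rw [Measure.restrict_apply_univ, Set.Icc_prod_eq, Measure.volume_eq_prod, Measure.prod_prod]
  simp

theorem stmt13_general (M : ℝ) :
    ∃ C : ℝ, 0 < C ∧
      ∀ (uA Z Y : ℝ × ℝ → ℝ) (K : ℝ), 0 ≤ K → K ≤ 1 →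
        (∀ x ∈ Set.Icc ((0 : ℝ), (0 : ℝ)) (1, 1), |uA x| ≤ M) →
        (∀ x ∈ Set.Icc ((0 : ℝ), (0 : ℝ)) (1, 1), |Z x| ≤ K) →
        Measurable uA → Measurable Z → Measurable Y →
        IntegrableOn (fun x => |Y x| ^ 3) (Set.Icc ((0 : ℝ), (0 : ℝ)) (1, 1)) volume →
        |∫ x in Set.Icc ((0 : ℝ), (0 : ℝ)) (1, 1),
            ((Y x + Z x) ^ 2 * (3 * uA x + (Y x + Z x))) * Z x|
          ≤ C * K * (K ^ 3 + K ^ 2 +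
              (∫ x in Set.Icc ((0 : ℝ), (0 : ℝ)) (1, 1), |Y x| ^ 3) ^ ((2 : ℝ) / 3) +
              (∫ x in Set.Icc ((0 : ℝ), (0 : ℝ)) (1, 1), |Y x| ^ 3)) := by
  refine ⟨6 * |M| + 3, by positivity, ?_⟩
  intro uA Z Y K hK0 hK1 huA hZ _ _ hY hY3
  have hpointwise : ∀ᵐ x ∂volume.restrict (Set.Icc ((0 : ℝ), (0 : ℝ)) (1, 1)),
      |(Y x + Z x) ^ 2 * (3 * uA x + (Y x + Z x)) * Z x|
        ≤ (6 * |M| + 3) * K * (K ^ 2 + |Y x| ^ 2 + |Y x| ^ 3) := by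
    filter_upwards [ae_restrict_mem measurableSet_Icc] with x hx
    exact abs_cubic_remainder_mul_le ((huA x hx).trans (le_abs_self M)) (hZ x hx) hK1
  calc _ ≤ (6 * |M| + 3) * K * (K ^ 2 +
          (∫ x in Set.Icc ((0 : ℝ), (0 : ℝ)) (1, 1), |Y x| ^ 3) ^ ((2 : ℝ) / 3) +
          (∫ x in Set.Icc ((0 : ℝ), (0 : ℝ)) (1, 1), |Y x| ^ 3)) :=
        abs_integral_le_of_abs_le_sq_add_cube (by positivity) hY.aestronglyMeasurable hY3
          hpointwise
    _ ≤ _ := by gcongr; exact le_add_of_nonneg_left (by positivity)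

/-- With `N(u,v) = v²(3u+v)` (from `f(u)=u³-u`), `|u_A| ≤ M`, `‖Z‖_{L^∞} ≤ K ≤ 1` and
`Y ∈ L³(D)`, one has
`|⟨N(u_A, Y+Z), Z⟩| ≤ C K (K³ + K² + ‖Y‖_{L³}² + ‖Y‖_{L³}³)` with `C = C(M, |D|)`. -/
theorem stmt13 (M : ℝ) (hM : 0 < M) :
    ∃ C : ℝ, 0 < C ∧
      ∀ (uA Z Y : ℝ × ℝ → ℝ) (K : ℝ), 0 ≤ K → K ≤ 1 →
        (∀ x ∈ Set.Icc ((0 : ℝ), (0 : ℝ)) (1, 1), |uA x| ≤ M) →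
        (∀ x ∈ Set.Icc ((0 : ℝ), (0 : ℝ)) (1, 1), |Z x| ≤ K) →
        Measurable uA → Measurable Z → Measurable Y →
        IntegrableOn (fun x => |Y x| ^ 3) (Set.Icc ((0 : ℝ), (0 : ℝ)) (1, 1)) volume →
        |∫ x in Set.Icc ((0 : ℝ), (0 : ℝ)) (1, 1),
            ((Y x + Z x) ^ 2 * (3 * uA x + (Y x + Z x))) * Z x|
          ≤ C * K * (K ^ 3 + K ^ 2 +
              (∫ x in Set.Icc ((0 : ℝ), (0 : ℝ)) (1, 1), |Y x| ^ 3) ^ ((2 : ℝ) / 3) +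
              (∫ x in Set.Icc ((0 : ℝ), (0 : ℝ)) (1, 1), |Y x| ^ 3)) :=
  stmt13_general M
end
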